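/- arXiv:1804.07040 — 4 statements merged into one kernel-verified Lean document; each statement's English description precedes it below -/
import Mathlib

section
/- Under the stated hypotheses (continuity of the bilinear forms a, b, c with constants M_a, M_b, M_c; coercivity of a on the kernel V⁰ with constant k_a; the inf-sup condition for b with constant k_b; and the smallness condition δ := M_a (1 + M_a/k_a) M_c / k_b² < 1), the generalized saddle-point problem has exactly one solution: there exists a unique pair (u,p) ∈ V × Q such that a(u,v) + b(v,p) = F(v) for all v ∈ V and b(u,q) − c(p,q) = G(q) for all q ∈ Q. -/
/-!
For fixed `r : Q`, replacing `c p` by `c r` leaves a classical Brezzi problem with datum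
`G + c r`: lift `G + c r` through `b` (inf-sup), correct on `ker b` by Lax–Milgram (coercivity),
and recover the multiplier from `F - a u`, which vanishes on `ker b` (inf-sup again). The a priori
estimates of that problem bound the multiplier by `Ma (1 + Ma / ka) / kb²` times the datum, so
`r ↦ multiplier` is a contraction with constant `δ`. Its fixed point solves the generalized
problem, and the same estimate applied to the difference of two solutions gives uniqueness.
-/

open RealInnerProductSpace ContinuousLinearMap

theorem exists_isFixedPt_of_norm_sub_le {E : Type*} [NormedAddCommGroup E] [CompleteSpace E]
    {f : E → E} {K : ℝ} (hK : K < 1) (hf : ∀ x y, ‖f x - f y‖ ≤ K * ‖x - y‖) :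
    ∃ x, Function.IsFixedPt f x := by
  have hf' : ContractingWith K.toNNReal f :=
    ⟨Real.toNNReal_lt_one.2 hK, .of_dist_le' fun x y => by simpa [dist_eq_norm] using hf x y⟩
  exact ⟨_, hf'.fixedPoint_isFixedPt⟩

theorem IsCoercive.exists_forall_apply_eq {E : Type*} [NormedAddCommGroup E]
    [InnerProductSpace ℝ E] [CompleteSpace E] {B : E →L[ℝ] E →L[ℝ] ℝ} (hB : IsCoercive B)
    (f : E →L[ℝ] ℝ) : ∃ u, ∀ v, B u v = f v := by
  refine ⟨hB.continuousLinearEquivOfBilin.symm ((InnerProductSpace.toDual ℝ E).symm f), fun v => ?_⟩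
  rw [← hB.continuousLinearEquivOfBilin_apply, ContinuousLinearEquiv.apply_symm_apply,
    InnerProductSpace.toDual_symm_apply]

section SaddlePoint

variable {V Q : Type*} [NormedAddCommGroup V] [InnerProductSpace ℝ V]
    [NormedAddCommGroup Q] [InnerProductSpace ℝ Q]

def InfSupCondition (b : V →L[ℝ] Q →L[ℝ] ℝ) (k : ℝ) : Prop :=
  ∀ q : Q, ∃ v : V, v ≠ 0 ∧ k * ‖v‖ * ‖q‖ ≤ b v q

noncomputable def rieszTranspose [CompleteSpace V] (b : V →L[ℝ] Q →L[ℝ] ℝ) : Q →L[ℝ] V :=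
  (InnerProductSpace.toDual ℝ V).symm.toContinuousLinearEquiv.toContinuousLinearMap.comp b.flip

theorem inner_rieszTranspose_apply [CompleteSpace V] (b : V →L[ℝ] Q →L[ℝ] ℝ) (q : Q) (v : V) :
    ⟪rieszTranspose b q, v⟫ = b v q := by
  simp [rieszTranspose]

variable {a : V →L[ℝ] V →L[ℝ] ℝ} {b : V →L[ℝ] Q →L[ℝ] ℝ} {c : Q →L[ℝ] Q →L[ℝ] ℝ}
    {Ma Mc ka kb : ℝ}

theorem InfSupCondition.mul_norm_le_mul_norm_of_forall_add_eq_zero (hb : InfSupCondition b kb)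
    {u : V} {p : Q} (ha : ∀ v, |a u v| ≤ Ma * ‖u‖ * ‖v‖) (h : ∀ v, a u v + b v p = 0) :
    kb * ‖p‖ ≤ Ma * ‖u‖ := by
  obtain ⟨v, hv, hvp⟩ := hb p
  have : ‖v‖ * (kb * ‖p‖) ≤ ‖v‖ * (Ma * ‖u‖) := calc
    ‖v‖ * (kb * ‖p‖) ≤ b v p := by linarith
    _ = -a u v := by linarith [h v]
    _ ≤ ‖v‖ * (Ma * ‖u‖) := (neg_le_abs _).trans (by linarith [ha v])
  exact le_of_mul_le_mul_left this (norm_pos_iff.2 hv)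

variable [CompleteSpace V]

theorem exists_mem_forall_apply_eq_of_coercive_on {K : Submodule ℝ V} (hK : IsClosed (K : Set V))
    (hka : 0 < ka) (hcoer : ∀ u ∈ K, ka * ‖u‖ ^ 2 ≤ a u u) (ℓ : V →L[ℝ] ℝ) :
    ∃ u ∈ K, ∀ v ∈ K, a u v = ℓ v := by
  have := hK.completeSpace_coe
  have hcoerK : IsCoercive (a.bilinearComp K.subtypeL K.subtypeL) :=
    ⟨ka, hka, fun u => by simpa [sq, mul_assoc] using hcoer u u.2⟩
  obtain ⟨u, hu⟩ := hcoerK.exists_forall_apply_eq (ℓ.comp K.subtypeL)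
  exact ⟨u, u.2, fun v hv => hu ⟨v, hv⟩⟩

theorem InfSupCondition.mul_norm_le_norm_rieszTranspose (hb : InfSupCondition b kb) (q : Q) :
    kb * ‖q‖ ≤ ‖rieszTranspose b q‖ := by
  obtain ⟨v, hv, hvq⟩ := hb q
  have : ‖v‖ * (kb * ‖q‖) ≤ ‖v‖ * ‖rieszTranspose b q‖ := calc
    ‖v‖ * (kb * ‖q‖) ≤ ⟪rieszTranspose b q, v⟫ := by
      rw [inner_rieszTranspose_apply]; linarith
    _ ≤ ‖v‖ * ‖rieszTranspose b q‖ := by rw [mul_comm]; exact real_inner_le_norm _ _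
  exact le_of_mul_le_mul_left this (norm_pos_iff.2 hv)

variable [CompleteSpace Q]

/-- Lax–Milgram for the Gram form `(w, q) ↦ ⟪bᵀ q, bᵀ w⟫`, which the inf-sup condition makes
coercive with constant `kb ^ 2`. -/
theorem InfSupCondition.exists_apply_rieszTranspose_eq (hb : InfSupCondition b kb) (hkb : 0 < kb)
    (ψ : Q →L[ℝ] ℝ) : ∃ w, b (rieszTranspose b w) = ψ := by
  have hcoer : IsCoercive (b.comp (rieszTranspose b)) := by
    refine ⟨kb ^ 2, by positivity, fun w => ?_⟩
    have := hb.mul_norm_le_norm_rieszTranspose w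
    rw [comp_apply, ← inner_rieszTranspose_apply, real_inner_self_eq_norm_sq]
    nlinarith [pow_le_pow_left₀ (by positivity) this 2]
  obtain ⟨w, hw⟩ := hcoer.exists_forall_apply_eq ψ
  exact ⟨w, ContinuousLinearMap.ext hw⟩

theorem InfSupCondition.exists_apply_eq (hb : InfSupCondition b kb) (hkb : 0 < kb)
    (ψ : Q →L[ℝ] ℝ) : ∃ u, b u = ψ ∧ kb * ‖u‖ ≤ ‖ψ‖ := by
  obtain ⟨w, hw⟩ := hb.exists_apply_rieszTranspose_eq hkb ψ
  set u := rieszTranspose b w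
  have hw_le : kb * ‖w‖ ≤ ‖u‖ := hb.mul_norm_le_norm_rieszTranspose w
  have hu_sq : ‖u‖ ^ 2 ≤ ‖ψ‖ * ‖w‖ := calc
    ‖u‖ ^ 2 = ψ w := by rw [← real_inner_self_eq_norm_sq, inner_rieszTranspose_apply, hw]
    _ ≤ ‖ψ‖ * ‖w‖ := (le_abs_self _).trans (ψ.le_opNorm w)
  refine ⟨u, hw, ?_⟩
  rcases (norm_nonneg u).eq_or_lt with hu | hu
  · rw [← hu, mul_zero]; exact norm_nonneg ψ
  · nlinarith [norm_nonneg ψ]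

/-- The Riesz representative `x` of `ℓ` is orthogonal to `ker b`; so is `bᵀ w` for the `w` with
`b (bᵀ w) = b x`, while `bᵀ w - x ∈ ker b`. Hence `bᵀ w = x`. -/
theorem InfSupCondition.exists_flip_eq (hb : InfSupCondition b kb) (hkb : 0 < kb)
    (ℓ : V →L[ℝ] ℝ) (hℓ : ∀ v, b v = 0 → ℓ v = 0) : ∃ p, b.flip p = ℓ := by
  set x := (InnerProductSpace.toDual ℝ V).symm ℓ
  have hx (v : V) : ⟪x, v⟫ = ℓ v := InnerProductSpace.toDual_symm_apply
  obtain ⟨w, hw⟩ := hb.exists_apply_rieszTranspose_eq hkb (b x)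
  have hd : b (rieszTranspose b w - x) = 0 := by rw [map_sub, hw, sub_self]
  have hwx : rieszTranspose b w = x := by
    rw [← sub_eq_zero, ← inner_self_eq_zero (𝕜 := ℝ)]
    nth_rewrite 1 [inner_sub_left]
    rw [inner_rieszTranspose_apply, hd, hx, hℓ _ hd]
    simp
  refine ⟨w, ContinuousLinearMap.ext fun v => ?_⟩
  rw [flip_apply, ← inner_rieszTranspose_apply, hwx, hx]

theorem exists_forall_apply_add_eq_of_coercive (hka : 0 < ka)
    (hcoer : ∀ u, b u = 0 → ka * ‖u‖ ^ 2 ≤ a u u) (hb : InfSupCondition b kb) (hkb : 0 < kb)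
    (F : V →L[ℝ] ℝ) (G : Q →L[ℝ] ℝ) : ∃ u p, (∀ v, a u v + b v p = F v) ∧ b u = G := by
  obtain ⟨u₁, hu₁, -⟩ := hb.exists_apply_eq hkb G
  obtain ⟨u₀, hu₀, ha₀⟩ :=
    exists_mem_forall_apply_eq_of_coercive_on (isClosed_ker b) hka hcoer (F - a u₁)
  obtain ⟨p, hp⟩ := hb.exists_flip_eq hkb (F - a (u₀ + u₁)) fun v hv => by
    simp [ha₀ v hv]
  refine ⟨u₀ + u₁, p, fun v => ?_, by rw [map_add, show b u₀ = 0 from hu₀, hu₁, zero_add]⟩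
  have := DFunLike.congr_fun hp v
  simp only [flip_apply, sub_apply] at this
  linarith

theorem InfSupCondition.mul_norm_le_mul_norm_apply_of_forall_add_eq_zero
    (hb : InfSupCondition b kb) (hkb : 0 < kb) (hMa : 0 ≤ Ma)
    (ha : ∀ u v, |a u v| ≤ Ma * ‖u‖ * ‖v‖) (hka : 0 < ka)
    (hcoer : ∀ u, b u = 0 → ka * ‖u‖ ^ 2 ≤ a u u) {u : V} {p : Q}
    (h : ∀ v, a u v + b v p = 0) : kb * ‖u‖ ≤ (1 + Ma / ka) * ‖b u‖ := by
  obtain ⟨u₁, hu₁, hu₁_le⟩ := hb.exists_apply_eq hkb (b u)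
  set d := u - u₁
  have hd : b d = 0 := by rw [map_sub, hu₁, sub_self]
  have hd_sq : ka * ‖d‖ ^ 2 ≤ Ma * ‖u₁‖ * ‖d‖ := calc
    ka * ‖d‖ ^ 2 ≤ a d d := hcoer d hd
    _ = -a u₁ d := by
      have : b d p = 0 := by rw [hd, zero_apply]
      rw [show a d = a u - a u₁ from map_sub a u u₁, sub_apply]
      linarith [h d]
    _ ≤ Ma * ‖u₁‖ * ‖d‖ := (neg_le_abs _).trans (ha _ _)
  have hd_le : ‖d‖ ≤ Ma / ka * ‖u₁‖ := by
    rw [div_mul_eq_mul_div, le_div_iff₀ hka]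
    rcases (norm_nonneg d).eq_or_lt with hd0 | hd0
    · rw [← hd0, zero_mul]; positivity
    · nlinarith
  calc kb * ‖u‖ = kb * ‖d + u₁‖ := by rw [sub_add_cancel]
    _ ≤ kb * (‖d‖ + ‖u₁‖) := by gcongr; exact norm_add_le _ _
    _ ≤ (1 + Ma / ka) * (kb * ‖u₁‖) := by nlinarith
    _ ≤ (1 + Ma / ka) * ‖b u‖ := by gcongr

theorem norm_le_of_forall_add_eq_zero_of_apply_eq (hb : InfSupCondition b kb) (hkb : 0 < kb)
    (hMa : 0 ≤ Ma) (ha : ∀ u v, |a u v| ≤ Ma * ‖u‖ * ‖v‖) (hka : 0 < ka)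
    (hcoer : ∀ u, b u = 0 → ka * ‖u‖ ^ 2 ≤ a u u)
    (hMc : 0 ≤ Mc) (hc : ∀ p q, |c p q| ≤ Mc * ‖p‖ * ‖q‖)
    {u : V} {p r : Q} (h₁ : ∀ v, a u v + b v p = 0) (h₂ : b u = c r) :
    ‖p‖ ≤ Ma * (1 + Ma / ka) * Mc / kb ^ 2 * ‖r‖ := by
  have hp := hb.mul_norm_le_mul_norm_of_forall_add_eq_zero (ha u) h₁
  have hu := hb.mul_norm_le_mul_norm_apply_of_forall_add_eq_zero hkb hMa ha hka hcoer h₁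
  have hcr : ‖c r‖ ≤ Mc * ‖r‖ := (c r).opNorm_le_bound (by positivity) (hc r)
  rw [h₂] at hu
  rw [div_mul_eq_mul_div, le_div_iff₀ (by positivity)]
  calc ‖p‖ * kb ^ 2 = kb * (kb * ‖p‖) := by ring
    _ ≤ kb * (Ma * ‖u‖) := by gcongr
    _ = Ma * (kb * ‖u‖) := by ring
    _ ≤ Ma * ((1 + Ma / ka) * (Mc * ‖r‖)) :=
      mul_le_mul_of_nonneg_left (hu.trans (by gcongr)) hMa
    _ = Ma * (1 + Ma / ka) * Mc * ‖r‖ := by ring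

theorem eq_zero_of_forall_add_eq_zero_of_apply_eq (hb : InfSupCondition b kb) (hkb : 0 < kb)
    (hMa : 0 ≤ Ma) (ha : ∀ u v, |a u v| ≤ Ma * ‖u‖ * ‖v‖) (hka : 0 < ka)
    (hcoer : ∀ u, b u = 0 → ka * ‖u‖ ^ 2 ≤ a u u)
    (hMc : 0 ≤ Mc) (hc : ∀ p q, |c p q| ≤ Mc * ‖p‖ * ‖q‖)
    (hδ : Ma * (1 + Ma / ka) * Mc / kb ^ 2 < 1)
    {u : V} {p : Q} (h₁ : ∀ v, a u v + b v p = 0) (h₂ : b u = c p) : u = 0 ∧ p = 0 := by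
  have hp : p = 0 := by
    have := norm_le_of_forall_add_eq_zero_of_apply_eq hb hkb hMa ha hka hcoer hMc hc h₁ h₂
    rw [← norm_le_zero_iff]
    nlinarith [norm_nonneg p]
  subst hp
  have hu := hb.mul_norm_le_mul_norm_apply_of_forall_add_eq_zero hkb hMa ha hka hcoer h₁
  rw [h₂, map_zero, norm_zero, mul_zero] at hu
  exact ⟨norm_le_zero_iff.1 (by nlinarith [norm_nonneg u]), rfl⟩

theorem existsUnique_saddle_point (hb : InfSupCondition b kb) (hkb : 0 < kb)
    (hMa : 0 ≤ Ma) (ha : ∀ u v, |a u v| ≤ Ma * ‖u‖ * ‖v‖) (hka : 0 < ka)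
    (hcoer : ∀ u, b u = 0 → ka * ‖u‖ ^ 2 ≤ a u u)
    (hMc : 0 ≤ Mc) (hc : ∀ p q, |c p q| ≤ Mc * ‖p‖ * ‖q‖)
    (hδ : Ma * (1 + Ma / ka) * Mc / kb ^ 2 < 1) (F : V →L[ℝ] ℝ) (G : Q →L[ℝ] ℝ) :
    ∃! up : V × Q, (∀ v, a up.1 v + b v up.2 = F v) ∧ (∀ q, b up.1 q - c up.2 q = G q) := by
  have hsub {u₁ u₂ : V} {p₁ p₂ : Q} (h₁ : ∀ v, a u₁ v + b v p₁ = F v)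
      (h₂ : ∀ v, a u₂ v + b v p₂ = F v) (v : V) : a (u₁ - u₂) v + b v (p₁ - p₂) = 0 := by
    simp only [map_sub, sub_apply]; linarith [h₁ v, h₂ v]
  choose u T hsol hbu using fun r =>
    exists_forall_apply_add_eq_of_coercive hka hcoer hb hkb F (G + c r)
  obtain ⟨r, hr⟩ := exists_isFixedPt_of_norm_sub_le hδ fun r s =>
    norm_le_of_forall_add_eq_zero_of_apply_eq hb hkb hMa ha hka hcoer hMc hc
      (hsub (hsol r) (hsol s)) (by rw [map_sub, hbu, hbu, map_sub]; abel)
  have hsol_r (v : V) : a (u r) v + b v r = F v := by simpa only [hr.eq] using hsol r v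
  have hbu_r (q : Q) : b (u r) q - c r q = G q := by simp [hbu]
  refine ⟨(u r, r), ⟨hsol_r, hbu_r⟩, ?_⟩
  rintro ⟨u', p'⟩ ⟨h₁, h₂⟩
  obtain ⟨hu, hp⟩ := eq_zero_of_forall_add_eq_zero_of_apply_eq hb hkb hMa ha hka hcoer hMc hc hδ
    (hsub h₁ hsol_r) (ContinuousLinearMap.ext fun q => by
      simp only [map_sub, sub_apply]; linarith [h₂ q, hbu_r q])
  exact Prod.ext (sub_eq_zero.1 hu) (sub_eq_zero.1 hp)

end SaddlePoint

theorem saddle_point_existence_uniqueness_general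
    {V Q : Type*}
    [NormedAddCommGroup V] [InnerProductSpace ℝ V] [CompleteSpace V]
    [NormedAddCommGroup Q] [InnerProductSpace ℝ Q] [CompleteSpace Q]
    (a : V →ₗ[ℝ] V →ₗ[ℝ] ℝ) (b : V →ₗ[ℝ] Q →ₗ[ℝ] ℝ) (c : Q →ₗ[ℝ] Q →ₗ[ℝ] ℝ)
    (Ma Mb Mc ka kb : ℝ)
    (hMa : 0 < Ma) (hMc : 0 < Mc)
    (ha : ∀ u v : V, |a u v| ≤ Ma * ‖u‖ * ‖v‖)
    (hb : ∀ (v : V) (q : Q), |b v q| ≤ Mb * ‖v‖ * ‖q‖)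
    (hc : ∀ p q : Q, |c p q| ≤ Mc * ‖p‖ * ‖q‖)
    (hka : 0 < ka)
    (hcoer : ∀ u : V, (∀ q : Q, b u q = 0) → ka * ‖u‖ ^ 2 ≤ a u u)
    (hkb : 0 < kb)
    (hinfsup : ∀ q : Q, ∃ v : V, v ≠ 0 ∧ kb * ‖v‖ * ‖q‖ ≤ b v q)
    (hδ : Ma * (1 + Ma / ka) * Mc / kb ^ 2 < 1)
    (F : V →L[ℝ] ℝ) (G : Q →L[ℝ] ℝ) :
    ∃! up : V × Q,
      (∀ v : V, a up.1 v + b v up.2 = F v) ∧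
      (∀ q : Q, b up.1 q - c up.2 q = G q) :=
  existsUnique_saddle_point (a := a.mkContinuous₂ Ma ha) (b := b.mkContinuous₂ Mb hb)
    (c := c.mkContinuous₂ Mc hc) hinfsup hkb hMa.le ha hka
    (fun u hu => hcoer u fun q => DFunLike.congr_fun hu q) hMc.le hc hδ F G

/-- Existence and uniqueness of solutions to the generalized saddle-point problem
(Theorem A.1, existence/uniqueness part). -/
theorem saddle_point_existence_uniqueness
    {V Q : Type*}
    [NormedAddCommGroup V] [InnerProductSpace ℝ V] [CompleteSpace V]
    [NormedAddCommGroup Q] [InnerProductSpace ℝ Q] [CompleteSpace Q]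
    (a : V →ₗ[ℝ] V →ₗ[ℝ] ℝ) (b : V →ₗ[ℝ] Q →ₗ[ℝ] ℝ) (c : Q →ₗ[ℝ] Q →ₗ[ℝ] ℝ)
    (Ma Mb Mc ka kb : ℝ)
    (hMa : 0 < Ma) (hMb : 0 < Mb) (hMc : 0 < Mc)
    (ha : ∀ u v : V, |a u v| ≤ Ma * ‖u‖ * ‖v‖)
    (hb : ∀ (v : V) (q : Q), |b v q| ≤ Mb * ‖v‖ * ‖q‖)
    (hc : ∀ p q : Q, |c p q| ≤ Mc * ‖p‖ * ‖q‖)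
    (hka : 0 < ka)
    (hcoer : ∀ u : V, (∀ q : Q, b u q = 0) → ka * ‖u‖ ^ 2 ≤ a u u)
    (hkb : 0 < kb)
    (hinfsup : ∀ q : Q, ∃ v : V, v ≠ 0 ∧ kb * ‖v‖ * ‖q‖ ≤ b v q)
    (hδ : Ma * (1 + Ma / ka) * Mc / kb ^ 2 < 1)
    (F : V →L[ℝ] ℝ) (G : Q →L[ℝ] ℝ) :
    ∃! up : V × Q,
      (∀ v : V, a up.1 v + b v up.2 = F v) ∧
      (∀ q : Q, b up.1 q - c up.2 q = G q) :=
  saddle_point_existence_uniqueness_general a b c Ma Mb Mc ka kb hMa hMc ha hb hc hka hcoer hkb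
    hinfsup hδ F G
end

section
/- Under the stated hypotheses, the solution component p of the generalized saddle-point problem satisfies the stability estimate ‖p‖_Q ≤ c₂₁ ‖F‖_{V'} + c₂₂ ‖G‖_{Q'}, where c₂₁ = (1/k_b) · (1/(1 − δ)) · (1 + M_a/k_a) and c₂₂ = c₂₁ · M_a/k_b. -/
/-!
Let `T : Q → V` be the Riesz operator of `b`, `⟪T q, v⟫ = b v q`. The inf-sup condition says
`k_b ‖q‖ ≤ ‖T q‖`, so `range T` is closed and `V = V⁰ ⊕ range T` with `V⁰ = (range T)ᗮ`; write
`u = u₀ + T q`. Testing the first equation with the inf-sup partner of `p` and with `u₀`, and the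
second one with `q`, gives
`k_b ‖p‖ ≤ ‖F‖ + M_a (‖u₀‖ + ‖T q‖)`, `k_a ‖u₀‖ ≤ ‖F‖ + M_a ‖T q‖`, `k_b ‖T q‖ ≤ ‖G‖ + M_c ‖p‖`.
Eliminating `‖u₀‖` and `‖T q‖` leaves `k_b (1 - δ) ‖p‖ ≤ (1 + M_a/k_a) (‖F‖ + (M_a/k_b) ‖G‖)`.
-/

open RealInnerProductSpace

theorem mul_le_of_mul_sq_le_mul {k x C : ℝ} (hx : 0 ≤ x) (hC : 0 ≤ C)
    (h : k * x ^ 2 ≤ C * x) : k * x ≤ C := by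
  rcases hx.eq_or_lt with rfl | hx
  · simpa using hC
  · exact le_of_mul_le_mul_right (by linarith) hx

theorem le_of_saddle_point_estimates {Ma Mc ka kb δ f g X Y P : ℝ}
    (hMa : 0 ≤ Ma) (hka : 0 < ka) (hkb : 0 < kb)
    (hδdef : δ = Ma * (1 + Ma / ka) * Mc / kb ^ 2) (hδ : δ < 1)
    (hP : kb * P ≤ f + Ma * (Y + X)) (hY : ka * Y ≤ f + Ma * X) (hX : kb * X ≤ g + Mc * P) :
    P ≤ (1 / kb * (1 / (1 - δ)) * (1 + Ma / ka)) * f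
      + (1 / kb * (1 / (1 - δ)) * (1 + Ma / ka) * (Ma / kb)) * g := by
  have hY' : Ma * Y ≤ Ma / ka * (f + Ma * X) :=
    calc Ma * Y = Ma / ka * (ka * Y) := by field_simp
      _ ≤ Ma / ka * (f + Ma * X) := mul_le_mul_of_nonneg_left hY (div_nonneg hMa hka.le)
  have hX' : Ma * X ≤ Ma / kb * (g + Mc * P) :=
    calc Ma * X = Ma / kb * (kb * X) := by field_simp
      _ ≤ Ma / kb * (g + Mc * P) := mul_le_mul_of_nonneg_left hX (div_nonneg hMa hkb.le)
  have hP' : kb * P ≤ (1 + Ma / ka) * (f + Ma * X) := by linarith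
  have hMaX := mul_le_mul_of_nonneg_left hX' (by positivity : 0 ≤ 1 + Ma / ka)
  have hδkb : kb * δ * P = (1 + Ma / ka) * (Ma / kb * (Mc * P)) := by
    rw [hδdef]; field_simp
  have key : kb * (1 - δ) * P ≤ (1 + Ma / ka) * (f + Ma / kb * g) := by linarith
  calc P ≤ (1 + Ma / ka) * (f + Ma / kb * g) / (kb * (1 - δ)) := by
        rw [le_div_iff₀ (mul_pos hkb (sub_pos.mpr hδ))]; linarith
    _ = _ := by field_simp

theorem ContinuousLinearMap.isClosed_range_of_mul_norm_le {𝕜 E F : Type*}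
    [NontriviallyNormedField 𝕜] [NormedAddCommGroup E] [NormedSpace 𝕜 E] [CompleteSpace E]
    [NormedAddCommGroup F] [NormedSpace 𝕜 F] (T : E →L[𝕜] F) {k : ℝ} (hk : 0 < k)
    (h : ∀ x, k * ‖x‖ ≤ ‖T x‖) : IsClosed (Set.range T) := by
  obtain ⟨K, hK⟩ := antilipschitzWith_iff_exists_mul_le_norm.mpr ⟨k, hk, h⟩
  exact hK.isClosed_range T.uniformContinuous

section InfSup

variable {V Q : Type*} [NormedAddCommGroup V] [InnerProductSpace ℝ V]
  [NormedAddCommGroup Q] [InnerProductSpace ℝ Q]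

theorem exists_inner_eq_of_bound [CompleteSpace V] (b : V →ₗ[ℝ] Q →ₗ[ℝ] ℝ) {Mb : ℝ}
    (hb : ∀ v q, |b v q| ≤ Mb * ‖v‖ * ‖q‖) : ∃ T : Q →L[ℝ] V, ∀ q v, ⟪T q, v⟫ = b v q :=
  ⟨(InnerProductSpace.toDual ℝ V).symm.toContinuousLinearEquiv.toContinuousLinearMap ∘L
      (b.mkContinuous₂ Mb hb).flip, fun q v => by simp⟩

theorem mul_norm_le_of_inner_eq_of_infSup {b : V →ₗ[ℝ] Q →ₗ[ℝ] ℝ} {T : Q → V} {kb : ℝ}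
    (hT : ∀ q v, ⟪T q, v⟫ = b v q) (hinfsup : ∀ q : Q, ∃ v : V, v ≠ 0 ∧ kb * ‖v‖ * ‖q‖ ≤ b v q)
    (q : Q) : kb * ‖q‖ ≤ ‖T q‖ := by
  obtain ⟨v, hv, hbv⟩ := hinfsup q
  refine le_of_mul_le_mul_right ?_ (norm_pos_iff.mpr hv)
  calc kb * ‖q‖ * ‖v‖ = kb * ‖v‖ * ‖q‖ := by ring
    _ ≤ ⟪T q, v⟫ := (hT q v).symm ▸ hbv
    _ ≤ ‖T q‖ * ‖v‖ := real_inner_le_norm _ _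

theorem exists_add_of_infSup [CompleteSpace V] [CompleteSpace Q] (b : V →ₗ[ℝ] Q →ₗ[ℝ] ℝ)
    {Mb kb : ℝ} (hb : ∀ v q, |b v q| ≤ Mb * ‖v‖ * ‖q‖) (hkb : 0 < kb)
    (hinfsup : ∀ q : Q, ∃ v : V, v ≠ 0 ∧ kb * ‖v‖ * ‖q‖ ≤ b v q) (u : V) :
    ∃ u₀ w : V, ∃ q : Q,
      u = u₀ + w ∧ (∀ q', b u₀ q' = 0) ∧ b w q = ‖w‖ ^ 2 ∧ kb * ‖q‖ ≤ ‖w‖ := by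
  obtain ⟨T, hT⟩ := exists_inner_eq_of_bound b hb
  have hTq := mul_norm_le_of_inner_eq_of_infSup hT hinfsup
  let S := LinearMap.range (T : Q →ₗ[ℝ] V)
  have : CompleteSpace S := (T.isClosed_range_of_mul_norm_le hkb hTq).completeSpace_coe
  obtain ⟨w, ⟨q, rfl⟩, u₀, hu₀, rfl⟩ := S.exists_add_mem_mem_orthogonal u
  refine ⟨u₀, T q, q, add_comm _ _, fun q' => ?_, ?_, hTq q⟩
  · rw [← hT]
    exact Submodule.inner_right_of_mem_orthogonal (LinearMap.mem_range_self _ q') hu₀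
  · rw [← hT, real_inner_self_eq_norm_sq]

end InfSup

namespace SaddlePoint

variable {V Q : Type*} [NormedAddCommGroup V] [NormedSpace ℝ V] [NormedAddCommGroup Q]
  [NormedSpace ℝ Q] {a : V →ₗ[ℝ] V →ₗ[ℝ] ℝ} {b : V →ₗ[ℝ] Q →ₗ[ℝ] ℝ} {c : Q →ₗ[ℝ] Q →ₗ[ℝ] ℝ}
  {Ma Mc ka kb : ℝ} {F : V →L[ℝ] ℝ} {G : Q →L[ℝ] ℝ} {u : V} {p : Q}

theorem mul_norm_p_le (ha : ∀ u v : V, |a u v| ≤ Ma * ‖u‖ * ‖v‖)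
    (hinfsup : ∀ q : Q, ∃ v : V, v ≠ 0 ∧ kb * ‖v‖ * ‖q‖ ≤ b v q)
    (hsol1 : ∀ v : V, a u v + b v p = F v) : kb * ‖p‖ ≤ ‖F‖ + Ma * ‖u‖ := by
  obtain ⟨v, hv, hbv⟩ := hinfsup p
  refine le_of_mul_le_mul_right ?_ (norm_pos_iff.mpr hv)
  have hF := (Real.le_norm_self _).trans (F.le_opNorm v)
  have ha' := neg_le_of_abs_le (ha u v)
  linarith [hsol1 v]

theorem mul_norm_ker_le (hMa : 0 < Ma) (ha : ∀ u v : V, |a u v| ≤ Ma * ‖u‖ * ‖v‖)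
    (hcoer : ∀ u : V, (∀ q : Q, b u q = 0) → ka * ‖u‖ ^ 2 ≤ a u u)
    (hsol1 : ∀ v : V, a u v + b v p = F v) {u₀ w : V} (hu : u = u₀ + w)
    (hu₀ : ∀ q, b u₀ q = 0) : ka * ‖u₀‖ ≤ ‖F‖ + Ma * ‖w‖ := by
  refine mul_le_of_mul_sq_le_mul (norm_nonneg _) (by positivity) ?_
  have hF := (Real.le_norm_self _).trans (F.le_opNorm u₀)
  have ha' := neg_le_of_abs_le (ha w u₀)
  have hsol : a u₀ u₀ + a w u₀ = F u₀ := by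
    simpa [hu, hu₀ p] using hsol1 u₀
  linarith [hcoer u₀ hu₀]

theorem mul_norm_orth_le (hMc : 0 < Mc) (hc : ∀ p q : Q, |c p q| ≤ Mc * ‖p‖ * ‖q‖)
    (hkb : 0 < kb) (hsol2 : ∀ q : Q, b u q - c p q = G q) {u₀ w : V} {q : Q}
    (hu : u = u₀ + w) (hu₀ : ∀ q, b u₀ q = 0) (hwq : b w q = ‖w‖ ^ 2)
    (hq : kb * ‖q‖ ≤ ‖w‖) : kb * ‖w‖ ≤ ‖G‖ + Mc * ‖p‖ := by
  refine mul_le_of_mul_sq_le_mul (norm_nonneg _) (by positivity) ?_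
  have hG := (Real.le_norm_self _).trans (G.le_opNorm q)
  have hc' := le_of_abs_le (hc p q)
  have hsol : b w q - c p q = G q := by simpa [hu, hu₀ q] using hsol2 q
  have hw : ‖w‖ ^ 2 ≤ (‖G‖ + Mc * ‖p‖) * ‖q‖ := by linarith
  calc kb * ‖w‖ ^ 2 ≤ kb * ((‖G‖ + Mc * ‖p‖) * ‖q‖) := by gcongr
    _ = (‖G‖ + Mc * ‖p‖) * (kb * ‖q‖) := by ring
    _ ≤ (‖G‖ + Mc * ‖p‖) * ‖w‖ := by gcongr

end SaddlePoint

theorem saddle_point_stability_p_general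
    {V Q : Type*}
    [NormedAddCommGroup V] [InnerProductSpace ℝ V] [CompleteSpace V]
    [NormedAddCommGroup Q] [InnerProductSpace ℝ Q] [CompleteSpace Q]
    (a : V →ₗ[ℝ] V →ₗ[ℝ] ℝ) (b : V →ₗ[ℝ] Q →ₗ[ℝ] ℝ) (c : Q →ₗ[ℝ] Q →ₗ[ℝ] ℝ)
    (Ma Mb Mc ka kb δ : ℝ)
    (hMa : 0 < Ma) (hMc : 0 < Mc)
    (ha : ∀ u v : V, |a u v| ≤ Ma * ‖u‖ * ‖v‖)
    (hb : ∀ (v : V) (q : Q), |b v q| ≤ Mb * ‖v‖ * ‖q‖)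
    (hc : ∀ p q : Q, |c p q| ≤ Mc * ‖p‖ * ‖q‖)
    (hka : 0 < ka)
    (hcoer : ∀ u : V, (∀ q : Q, b u q = 0) → ka * ‖u‖ ^ 2 ≤ a u u)
    (hkb : 0 < kb)
    (hinfsup : ∀ q : Q, ∃ v : V, v ≠ 0 ∧ kb * ‖v‖ * ‖q‖ ≤ b v q)
    (hδdef : δ = Ma * (1 + Ma / ka) * Mc / kb ^ 2)
    (hδ : δ < 1)
    (F : V →L[ℝ] ℝ) (G : Q →L[ℝ] ℝ)
    (u : V) (p : Q)
    (hsol1 : ∀ v : V, a u v + b v p = F v)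
    (hsol2 : ∀ q : Q, b u q - c p q = G q) :
    ‖p‖ ≤ (1 / kb * (1 / (1 - δ)) * (1 + Ma / ka)) * ‖F‖
      + (1 / kb * (1 / (1 - δ)) * (1 + Ma / ka) * (Ma / kb)) * ‖G‖ := by
  obtain ⟨u₀, w, q, hu, hu₀, hwq, hq⟩ := exists_add_of_infSup b hb hkb hinfsup u
  have hu_le : ‖u‖ ≤ ‖u₀‖ + ‖w‖ := hu ▸ norm_add_le u₀ w
  have hp := (SaddlePoint.mul_norm_p_le ha hinfsup hsol1).trans
    (add_le_add_right (mul_le_mul_of_nonneg_left hu_le hMa.le) _)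
  have hu₀_le := SaddlePoint.mul_norm_ker_le hMa ha hcoer hsol1 hu hu₀
  have hw_le := SaddlePoint.mul_norm_orth_le hMc hc hkb hsol2 hu hu₀ hwq hq
  exact le_of_saddle_point_estimates hMa.le hka hkb hδdef hδ hp hu₀_le hw_le

/-- Stability estimate for the component `p` of a solution of the generalized
saddle-point problem (Theorem A.1, estimate (A.5b)). -/
theorem saddle_point_stability_p
    {V Q : Type*}
    [NormedAddCommGroup V] [InnerProductSpace ℝ V] [CompleteSpace V]
    [NormedAddCommGroup Q] [InnerProductSpace ℝ Q] [CompleteSpace Q]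
    (a : V →ₗ[ℝ] V →ₗ[ℝ] ℝ) (b : V →ₗ[ℝ] Q →ₗ[ℝ] ℝ) (c : Q →ₗ[ℝ] Q →ₗ[ℝ] ℝ)
    (Ma Mb Mc ka kb δ : ℝ)
    (hMa : 0 < Ma) (hMb : 0 < Mb) (hMc : 0 < Mc)
    (ha : ∀ u v : V, |a u v| ≤ Ma * ‖u‖ * ‖v‖)
    (hb : ∀ (v : V) (q : Q), |b v q| ≤ Mb * ‖v‖ * ‖q‖)
    (hc : ∀ p q : Q, |c p q| ≤ Mc * ‖p‖ * ‖q‖)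
    (hka : 0 < ka)
    (hcoer : ∀ u : V, (∀ q : Q, b u q = 0) → ka * ‖u‖ ^ 2 ≤ a u u)
    (hkb : 0 < kb)
    (hinfsup : ∀ q : Q, ∃ v : V, v ≠ 0 ∧ kb * ‖v‖ * ‖q‖ ≤ b v q)
    (hδdef : δ = Ma * (1 + Ma / ka) * Mc / kb ^ 2)
    (hδ : δ < 1)
    (F : V →L[ℝ] ℝ) (G : Q →L[ℝ] ℝ)
    (u : V) (p : Q)
    (hsol1 : ∀ v : V, a u v + b v p = F v)
    (hsol2 : ∀ q : Q, b u q - c p q = G q) :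
    ‖p‖ ≤ (1 / kb * (1 / (1 - δ)) * (1 + Ma / ka)) * ‖F‖
      + (1 / kb * (1 / (1 - δ)) * (1 + Ma / ka) * (Ma / kb)) * ‖G‖ :=
  saddle_point_stability_p_general a b c Ma Mb Mc ka kb δ hMa hMc ha hb hc hka hcoer hkb hinfsup
    hδdef hδ F G u p hsol1 hsol2
end

section
/- Under the stated discrete hypotheses (coercivity of a on the discrete kernel V_h⁰ with constant k_{a,h}; discrete inf-sup condition for b with constant k_{b,h}; and δ_h := M_a (1 + M_a/k_{a,h}) M_c / k_{b,h}² < 1), the discrete generalized saddle-point problem has exactly one solution: there exists a unique pair (u_h, p_h) ∈ V_h × Q_h such that a(u_h, v_h) + b(v_h, p_h) = F(v_h) for all v_h ∈ V_h and b(u_h, q_h) − c(p_h, q_h) = G(q_h) for all q_h ∈ Q_h. -/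
open InnerProductSpace RealInnerProductSpace

/-- Riesz representation as a linear map, for finite-dimensional real inner product spaces. -/
noncomputable def rieszL (E : Type*) [NormedAddCommGroup E] [InnerProductSpace ℝ E]
    [FiniteDimensional ℝ E] : (E →ₗ[ℝ] ℝ) →ₗ[ℝ] E where
  toFun g := (toDual ℝ E).symm (LinearMap.toContinuousLinearMap g)
  map_add' g h := by
    apply ext_inner_right ℝ
    intro v
    simp [toDual_symm_apply, inner_add_left]
  map_smul' r g := by
    apply ext_inner_right ℝ
    intro v
    simp [toDual_symm_apply, inner_smul_left]

theorem inner_rieszL {E : Type*} [NormedAddCommGroup E] [InnerProductSpace ℝ E]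
    [FiniteDimensional ℝ E] (g : E →ₗ[ℝ] ℝ) (x : E) : ⟪rieszL E g, x⟫_ℝ = g x := by
  simp [rieszL, toDual_symm_apply]

theorem exists_rightInv {E F : Type*}
    [NormedAddCommGroup E] [InnerProductSpace ℝ E] [FiniteDimensional ℝ E]
    [NormedAddCommGroup F] [InnerProductSpace ℝ F] [FiniteDimensional ℝ F]
    (β : E →ₗ[ℝ] F →ₗ[ℝ] ℝ) {kbh : ℝ} (hkbh : 0 < kbh)
    (hinf : ∀ q : F, ∃ v : E, v ≠ 0 ∧ kbh * ‖v‖ * ‖q‖ ≤ β v q)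
    (g : F →ₗ[ℝ] ℝ) {Cg : ℝ} (hCg : 0 ≤ Cg) (hg : ∀ q : F, g q ≤ Cg * ‖q‖) :
    ∃ ub : E, (∀ q : F, β ub q = g q) ∧ kbh * ‖ub‖ ≤ Cg := by
  set Bs : F →ₗ[ℝ] E := (rieszL E) ∘ₗ β.flip with hBsdef
  have hBs : ∀ (w : F) (v : E), ⟪Bs w, v⟫_ℝ = β v w := by
    intro w v
    simp [hBsdef, inner_rieszL]
  set S : F →ₗ[ℝ] F := (rieszL F) ∘ₗ (β ∘ₗ Bs) with hSdef
  have hS : ∀ (w q : F), ⟪S w, q⟫_ℝ = β (Bs w) q := by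
    intro w q
    simp [hSdef, inner_rieszL]
  have hinj : Function.Injective S := by
    rw [injective_iff_map_eq_zero]
    intro w hw
    have h1 : β (Bs w) w = 0 := by rw [← hS, hw, inner_zero_left]
    have h2 : Bs w = 0 := by
      rw [← inner_self_eq_zero (𝕜 := ℝ) (x := Bs w)]
      rw [hBs w (Bs w)]
      exact h1
    obtain ⟨v, hv0, hineq⟩ := hinf w
    have hbv : β v w = 0 := by rw [← hBs, h2, inner_zero_left]
    have hvpos : 0 < ‖v‖ := norm_pos_iff.mpr hv0
    have : kbh * ‖v‖ * ‖w‖ ≤ 0 := hbv ▸ hineq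
    have hwle : ‖w‖ ≤ 0 := by
      by_contra hcon
      push_neg at hcon
      nlinarith [mul_pos (mul_pos hkbh hvpos) hcon]
    exact norm_le_zero_iff.mp hwle
  have hsurj : Function.Surjective S := (LinearMap.injective_iff_surjective).mp hinj
  obtain ⟨w, hw⟩ := hsurj (rieszL F g)
  refine ⟨Bs w, ?_, ?_⟩
  · intro q
    rw [← hS, hw, inner_rieszL]
  · have heq : ∀ q : F, β (Bs w) q = g q := by
      intro q; rw [← hS, hw, inner_rieszL]
    have hub2 : ‖Bs w‖ ^ 2 ≤ Cg * ‖w‖ := by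
      have : ‖Bs w‖ ^ 2 = β (Bs w) w := by
        rw [← hBs w (Bs w), real_inner_self_eq_norm_sq]
      rw [this, heq w]
      exact hg w
    obtain ⟨v, hv0, hineq⟩ := hinf w
    have hvpos : 0 < ‖v‖ := norm_pos_iff.mpr hv0
    have hlow : kbh * ‖w‖ ≤ ‖Bs w‖ := by
      have h3 : β v w ≤ ‖Bs w‖ * ‖v‖ := by
        rw [← hBs w v]
        exact real_inner_le_norm _ _
      have := hineq.trans h3
      nlinarith
    rcases eq_or_lt_of_le (norm_nonneg (Bs w)) with hA | hA
    · rw [← hA, mul_zero]; exact hCg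
    · nlinarith [mul_le_mul_of_nonneg_left hub2 hkbh.le, mul_le_mul_of_nonneg_left hlow hCg,
        norm_nonneg w]

theorem homogeneous_zero {E F : Type*}
    [NormedAddCommGroup E] [InnerProductSpace ℝ E] [FiniteDimensional ℝ E]
    [NormedAddCommGroup F] [InnerProductSpace ℝ F] [FiniteDimensional ℝ F]
    (aR : E →ₗ[ℝ] E →ₗ[ℝ] ℝ) (bR : E →ₗ[ℝ] F →ₗ[ℝ] ℝ) (cR : F →ₗ[ℝ] F →ₗ[ℝ] ℝ)
    {Ma Mc kah kbh : ℝ} (hMa : 0 < Ma) (hMc : 0 < Mc) (hkah : 0 < kah) (hkbh : 0 < kbh)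
    (ha : ∀ u v : E, |aR u v| ≤ Ma * ‖u‖ * ‖v‖)
    (hc : ∀ p q : F, |cR p q| ≤ Mc * ‖p‖ * ‖q‖)
    (hcoer : ∀ u : E, (∀ q : F, bR u q = 0) → kah * ‖u‖ ^ 2 ≤ aR u u)
    (hinf : ∀ q : F, ∃ v : E, v ≠ 0 ∧ kbh * ‖v‖ * ‖q‖ ≤ bR v q)
    (hδ : Ma * (1 + Ma / kah) * Mc / kbh ^ 2 < 1)
    (u : E) (p : F) (h1 : ∀ v : E, aR u v + bR v p = 0)
    (h2 : ∀ q : F, bR u q - cR p q = 0) : u = 0 ∧ p = 0 := by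
  -- clear the division in hδ
  have hδ' : Ma * (kah + Ma) * Mc < kah * kbh ^ 2 := by
    rw [div_lt_one (by positivity)] at hδ
    have h := mul_lt_mul_of_pos_left hδ hkah
    calc Ma * (kah + Ma) * Mc = kah * (Ma * (1 + Ma / kah) * Mc) := by
          field_simp
      _ < kah * kbh ^ 2 := h
  -- right inverse: ub with bR ub q = cR p q
  obtain ⟨ub, hub_eq, hub_norm⟩ := exists_rightInv bR hkbh hinf (cR p)
    (Cg := Mc * ‖p‖) (by positivity)
    (fun q => by
      calc cR p q ≤ |cR p q| := le_abs_self _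
        _ ≤ Mc * ‖p‖ * ‖q‖ := hc p q)
  set u0 : E := u - ub with hu0def
  have hu0ker : ∀ q : F, bR u0 q = 0 := by
    intro q
    have hbu : bR u q = cR p q := by linarith [h2 q]
    simp [hu0def, map_sub, hbu, hub_eq q]
  -- kah * ‖u0‖ ≤ Ma * ‖ub‖
  have w2 : kah * ‖u0‖ ≤ Ma * ‖ub‖ := by
    have hco : kah * ‖u0‖ ^ 2 ≤ aR u0 u0 := hcoer u0 hu0ker
    have ha1 : aR u u0 = 0 := by
      have := h1 u0
      have hb0 : bR u0 p = 0 := hu0ker p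
      linarith
    have ha2 : aR u0 u0 = - aR ub u0 := by
      have : aR u0 u0 = aR u u0 - aR ub u0 := by simp [hu0def, map_sub]; ring
      rw [this, ha1]; ring
    have ha3 : aR u0 u0 ≤ Ma * ‖ub‖ * ‖u0‖ := by
      rw [ha2]
      calc - aR ub u0 ≤ |aR ub u0| := neg_le_abs _
        _ ≤ Ma * ‖ub‖ * ‖u0‖ := ha ub u0
    rcases eq_or_lt_of_le (norm_nonneg u0) with hA | hA
    · rw [← hA, mul_zero]; positivity
    · nlinarith
  have w3 : ‖u‖ ≤ ‖u0‖ + ‖ub‖ := by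
    have : u = u0 + ub := by simp [hu0def]
    rw [this]; exact norm_add_le _ _
  -- kbh * ‖p‖ ≤ Ma * ‖u‖
  have w4 : kbh * ‖p‖ ≤ Ma * ‖u‖ := by
    obtain ⟨v, hv0, hineq⟩ := hinf p
    have hvpos : 0 < ‖v‖ := norm_pos_iff.mpr hv0
    have hbv : bR v p = - aR u v := by linarith [h1 v]
    have : kbh * ‖v‖ * ‖p‖ ≤ Ma * ‖u‖ * ‖v‖ := by
      calc kbh * ‖v‖ * ‖p‖ ≤ bR v p := hineq
        _ = - aR u v := hbv
        _ ≤ |aR u v| := neg_le_abs _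
        _ ≤ Ma * ‖u‖ * ‖v‖ := ha u v
    nlinarith
  -- conclude p = 0
  have hp0 : ‖p‖ ≤ 0 := by
    nlinarith [mul_le_mul_of_nonneg_left w3 (mul_pos hkah hkbh).le,
      mul_le_mul_of_nonneg_left w2 hkbh.le,
      mul_le_mul_of_nonneg_left hub_norm (by positivity : (0:ℝ) ≤ kah + Ma),
      mul_le_mul_of_nonneg_left w4 (mul_pos hkah hkbh).le,
      norm_nonneg p, norm_nonneg u, norm_nonneg ub, norm_nonneg u0]
  have hp : p = 0 := norm_le_zero_iff.mp hp0
  refine ⟨?_, hp⟩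
  have hpe : ‖p‖ = 0 := le_antisymm hp0 (norm_nonneg p)
  have hub0 : ‖ub‖ ≤ 0 := by
    have h := hub_norm
    rw [hpe, mul_zero] at h
    nlinarith [norm_nonneg ub]
  have hu00 : ‖u0‖ ≤ 0 := by nlinarith [norm_nonneg u0]
  have : ‖u‖ ≤ 0 := by linarith
  exact norm_le_zero_iff.mp this

theorem saddle_existence {E F : Type*}
    [NormedAddCommGroup E] [InnerProductSpace ℝ E] [FiniteDimensional ℝ E]
    [NormedAddCommGroup F] [InnerProductSpace ℝ F] [FiniteDimensional ℝ F]
    (aR : E →ₗ[ℝ] E →ₗ[ℝ] ℝ) (bR : E →ₗ[ℝ] F →ₗ[ℝ] ℝ) (cR : F →ₗ[ℝ] F →ₗ[ℝ] ℝ)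
    {Ma Mc kah kbh : ℝ} (hMa : 0 < Ma) (hMc : 0 < Mc) (hkah : 0 < kah) (hkbh : 0 < kbh)
    (ha : ∀ u v : E, |aR u v| ≤ Ma * ‖u‖ * ‖v‖)
    (hc : ∀ p q : F, |cR p q| ≤ Mc * ‖p‖ * ‖q‖)
    (hcoer : ∀ u : E, (∀ q : F, bR u q = 0) → kah * ‖u‖ ^ 2 ≤ aR u u)
    (hinf : ∀ q : F, ∃ v : E, v ≠ 0 ∧ kbh * ‖v‖ * ‖q‖ ≤ bR v q)
    (hδ : Ma * (1 + Ma / kah) * Mc / kbh ^ 2 < 1)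
    (FR : E →ₗ[ℝ] ℝ) (GR : F →ₗ[ℝ] ℝ) :
    ∃ (u : E) (p : F), (∀ v : E, aR u v + bR v p = FR v) ∧
      (∀ q : F, bR u q - cR p q = GR q) := by
  set M1 : (E × F) →ₗ[ℝ] (E →ₗ[ℝ] ℝ) :=
    aR ∘ₗ LinearMap.fst ℝ E F + bR.flip ∘ₗ LinearMap.snd ℝ E F with hM1def
  set M2 : (E × F) →ₗ[ℝ] (F →ₗ[ℝ] ℝ) :=
    bR ∘ₗ LinearMap.fst ℝ E F - cR ∘ₗ LinearMap.snd ℝ E F with hM2def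
  have hM1 : ∀ (x : E × F) (v : E), M1 x v = aR x.1 v + bR v x.2 := by
    intro x v; simp [hM1def]
  have hM2 : ∀ (x : E × F) (q : F), M2 x q = bR x.1 q - cR x.2 q := by
    intro x q; simp [hM2def]
  set D : (E × F) →ₗ[ℝ] (E × F) :=
    ((rieszL E) ∘ₗ M1).prod ((rieszL F) ∘ₗ M2) with hDdef
  have hD1 : ∀ x : E × F, (D x).1 = rieszL E (M1 x) := fun x => rfl
  have hD2 : ∀ x : E × F, (D x).2 = rieszL F (M2 x) := fun x => rfl
  have hinj : Function.Injective D := by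
    rw [injective_iff_map_eq_zero]
    intro x hx
    have h1 : ∀ v : E, aR x.1 v + bR v x.2 = 0 := by
      intro v
      have h := congrArg (fun z : E × F => ⟪z.1, v⟫_ℝ) hx
      simpa [hD1, inner_rieszL, hM1] using h
    have h2 : ∀ q : F, bR x.1 q - cR x.2 q = 0 := by
      intro q
      have h := congrArg (fun z : E × F => ⟪z.2, q⟫_ℝ) hx
      simpa [hD2, inner_rieszL, hM2] using h
    obtain ⟨hu, hp⟩ := homogeneous_zero aR bR cR hMa hMc hkah hkbh ha hc hcoer hinf hδ
      x.1 x.2 h1 h2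
    exact Prod.ext hu hp
  have hsurj : Function.Surjective D := (LinearMap.injective_iff_surjective).mp hinj
  obtain ⟨x, hx⟩ := hsurj (rieszL E FR, rieszL F GR)
  refine ⟨x.1, x.2, ?_, ?_⟩
  · intro v
    have h := congrArg (fun z : E × F => ⟪z.1, v⟫_ℝ) hx
    simpa [hD1, inner_rieszL, hM1] using h
  · intro q
    have h := congrArg (fun z : E × F => ⟪z.2, q⟫_ℝ) hx
    simpa [hD2, inner_rieszL, hM2] using h

/-- Existence and uniqueness of the solution of the discrete (Galerkin)
generalized saddle-point problem (Theorem A.2, existence/uniqueness part). -/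
theorem discrete_saddle_point_existence_uniqueness
    {V Q : Type*}
    [NormedAddCommGroup V] [InnerProductSpace ℝ V] [CompleteSpace V]
    [NormedAddCommGroup Q] [InnerProductSpace ℝ Q] [CompleteSpace Q]
    (a : V →ₗ[ℝ] V →ₗ[ℝ] ℝ) (b : V →ₗ[ℝ] Q →ₗ[ℝ] ℝ) (c : Q →ₗ[ℝ] Q →ₗ[ℝ] ℝ)
    (Ma Mb Mc kah kbh : ℝ)
    (hMa : 0 < Ma) (hMb : 0 < Mb) (hMc : 0 < Mc)
    (ha : ∀ u v : V, |a u v| ≤ Ma * ‖u‖ * ‖v‖)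
    (hb : ∀ (v : V) (q : Q), |b v q| ≤ Mb * ‖v‖ * ‖q‖)
    (hc : ∀ p q : Q, |c p q| ≤ Mc * ‖p‖ * ‖q‖)
    (Vh : Submodule ℝ V) (Qh : Submodule ℝ Q)
    [FiniteDimensional ℝ Vh] [FiniteDimensional ℝ Qh]
    (hkah : 0 < kah)
    (hcoerh : ∀ uh ∈ Vh, (∀ qh ∈ Qh, b uh qh = 0) → kah * ‖uh‖ ^ 2 ≤ a uh uh)
    (hkbh : 0 < kbh)
    (hinfsuph : ∀ qh ∈ Qh, ∃ vh ∈ Vh, vh ≠ 0 ∧ kbh * ‖vh‖ * ‖qh‖ ≤ b vh qh)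
    (hδh : Ma * (1 + Ma / kah) * Mc / kbh ^ 2 < 1)
    (F : V →L[ℝ] ℝ) (G : Q →L[ℝ] ℝ) :
    ∃! uph : V × Q,
      uph.1 ∈ Vh ∧ uph.2 ∈ Qh ∧
      (∀ vh ∈ Vh, a uph.1 vh + b vh uph.2 = F vh) ∧
      (∀ qh ∈ Qh, b uph.1 qh - c uph.2 qh = G qh) := by
  set aR : Vh →ₗ[ℝ] Vh →ₗ[ℝ] ℝ := a.compl₁₂ Vh.subtype Vh.subtype with haRdef
  set bR : Vh →ₗ[ℝ] Qh →ₗ[ℝ] ℝ := b.compl₁₂ Vh.subtype Qh.subtype with hbRdef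
  set cR : Qh →ₗ[ℝ] Qh →ₗ[ℝ] ℝ := c.compl₁₂ Qh.subtype Qh.subtype with hcRdef
  have haR : ∀ u v : Vh, aR u v = a (u : V) (v : V) := fun u v => rfl
  have hbR : ∀ (v : Vh) (q : Qh), bR v q = b (v : V) (q : Q) := fun v q => rfl
  have hcR : ∀ p q : Qh, cR p q = c (p : Q) (q : Q) := fun p q => rfl
  have haB : ∀ u v : Vh, |aR u v| ≤ Ma * ‖u‖ * ‖v‖ := by
    intro u v; rw [haR]
    simpa [Submodule.coe_norm] using ha (u : V) (v : V)
  have hcB : ∀ p q : Qh, |cR p q| ≤ Mc * ‖p‖ * ‖q‖ := by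
    intro p q; rw [hcR]
    simpa [Submodule.coe_norm] using hc (p : Q) (q : Q)
  have hcoerR : ∀ u : Vh, (∀ q : Qh, bR u q = 0) → kah * ‖u‖ ^ 2 ≤ aR u u := by
    intro u h
    rw [haR, Submodule.coe_norm]
    exact hcoerh (u : V) u.2 (fun qh hq => h ⟨qh, hq⟩)
  have hinfR : ∀ q : Qh, ∃ v : Vh, v ≠ 0 ∧ kbh * ‖v‖ * ‖q‖ ≤ bR v q := by
    intro q
    obtain ⟨vh, hvmem, hvne, hineq⟩ := hinfsuph (q : Q) q.2
    refine ⟨⟨vh, hvmem⟩, ?_, ?_⟩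
    · simp [Submodule.mk_eq_zero, hvne]
    · rw [hbR]
      simpa [Submodule.coe_norm] using hineq
  set FR : Vh →ₗ[ℝ] ℝ := F.toLinearMap ∘ₗ Vh.subtype with hFRdef
  set GR : Qh →ₗ[ℝ] ℝ := G.toLinearMap ∘ₗ Qh.subtype with hGRdef
  obtain ⟨u, p, heq1, heq2⟩ := saddle_existence aR bR cR hMa hMc hkah hkbh
    haB hcB hcoerR hinfR hδh FR GR
  refine ⟨((u : V), (p : Q)), ⟨u.2, p.2, ?_, ?_⟩, ?_⟩
  · intro vh hv
    have := heq1 ⟨vh, hv⟩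
    simpa [haR, hbR, hFRdef] using this
  · intro qh hq
    have := heq2 ⟨qh, hq⟩
    simpa [hbR, hcR, hGRdef] using this
  · rintro ⟨u', p'⟩ ⟨hu', hp', k1, k2⟩
    have h1 : ∀ v : Vh, aR (⟨u', hu'⟩ - u) v + bR v (⟨p', hp'⟩ - p) = 0 := by
      intro v
      have e1 : a u' (v : V) + b (v : V) p' = F (v : V) := k1 (v : V) v.2
      have e2 : aR u v + bR v p = FR v := heq1 v
      rw [haR, hbR, hFRdef] at e2
      simp only [LinearMap.comp_apply, ContinuousLinearMap.coe_coe,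
        Submodule.coe_subtype] at e2
      have hco : ((⟨u', hu'⟩ - u : Vh) : V) = u' - (u : V) := rfl
      have hcp : ((⟨p', hp'⟩ - p : Qh) : Q) = p' - (p : Q) := rfl
      rw [haR, hbR, hco, hcp]
      simp only [map_sub, LinearMap.sub_apply]
      linarith
    have h2 : ∀ q : Qh, bR (⟨u', hu'⟩ - u) q - cR (⟨p', hp'⟩ - p) q = 0 := by
      intro q
      have e1 : b u' (q : Q) - c p' (q : Q) = G (q : Q) := k2 (q : Q) q.2
      have e2 : bR u q - cR p q = GR q := heq2 q
      rw [hbR, hcR, hGRdef] at e2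
      simp only [LinearMap.comp_apply, ContinuousLinearMap.coe_coe,
        Submodule.coe_subtype] at e2
      have hco : ((⟨u', hu'⟩ - u : Vh) : V) = u' - (u : V) := rfl
      have hcp : ((⟨p', hp'⟩ - p : Qh) : Q) = p' - (p : Q) := rfl
      rw [hbR, hcR, hco, hcp]
      simp only [map_sub, LinearMap.sub_apply]
      linarith
    obtain ⟨hdu, hdp⟩ := homogeneous_zero aR bR cR hMa hMc hkah hkbh haB hcB hcoerR hinfR hδh
      _ _ h1 h2
    have hu : u' = (u : V) := by
      have := congrArg (Subtype.val) (sub_eq_zero.mp hdu)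
      simpa using this
    have hp : p' = (p : Q) := by
      have := congrArg (Subtype.val) (sub_eq_zero.mp hdp)
      simpa using this
    simp [hu, hp]
end

section
/- Set c₀ := r_min − V_∞/(2 μ_min) and c₁ := 1/μ_max − V_∞/(2 μ_min). If V_∞ < 2 μ_min · min(1/μ_max, r_min), then c₀ > 0, c₁ > 0, and for every u ∈ L²(Ω; ℝ) and every J ∈ L²(Ω; ℝ³) one has ∫_Ω μ(x)⁻¹ |J(x)|² dx + ∫_Ω r(x) u(x)² dx − ∫_Ω μ(x)⁻¹ (𝐯(x) · J(x)) u(x) dx ≥ c₀ ‖u‖²_{L²(Ω)} + c₁ ‖J‖²_{L²(Ω)}. -/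
open MeasureTheory

/-! Cauchy–Schwarz and Young's inequality `ab ≤ (a² + b²)/2` bound the advection term
`μ⁻¹ (v · J) u` pointwise by `V_∞/(2 μ_min) (|J|² + u²)`; the diffusion and reaction terms are
bounded below by `|J|²/μ_max` and `r_min u²`. Integrating the resulting pointwise inequality
gives the estimate, and the smallness of `V_∞` makes both constants positive. -/

section Pointwise

variable {E : Type*} [NormedAddCommGroup E] [InnerProductSpace ℝ E]

lemma abs_inner_mul_le_norm_mul_add_sq (w j : E) (u : ℝ) :
    |inner ℝ w j * u| ≤ ‖w‖ * ((‖j‖ ^ 2 + u ^ 2) / 2) := by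
  have young : ‖j‖ * |u| ≤ (‖j‖ ^ 2 + u ^ 2) / 2 := by
    nlinarith [two_mul_le_add_sq ‖j‖ |u|, sq_abs u]
  calc |inner ℝ w j * u| = |inner ℝ w j| * |u| := abs_mul _ _
    _ ≤ ‖w‖ * ‖j‖ * |u| := by gcongr; exact abs_real_inner_le_norm w j
    _ ≤ ‖w‖ * ((‖j‖ ^ 2 + u ^ 2) / 2) := by rw [mul_assoc]; gcongr

lemma abs_inv_mul_inner_mul_le {m mmin V : ℝ} {w : E} (hmmin : 0 < mmin) (hm : mmin ≤ m)
    (hw : ‖w‖ ≤ V) (j : E) (u : ℝ) :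
    |m⁻¹ * inner ℝ w j * u| ≤ V / (2 * mmin) * (‖j‖ ^ 2 + u ^ 2) := by
  have hm₀ : 0 < m := hmmin.trans_le hm
  calc |m⁻¹ * inner ℝ w j * u| = m⁻¹ * |inner ℝ w j * u| := by
        rw [mul_assoc, abs_mul, abs_of_pos (inv_pos.2 hm₀)]
    _ ≤ mmin⁻¹ * (V * ((‖j‖ ^ 2 + u ^ 2) / 2)) := by
        gcongr
        exact (abs_inner_mul_le_norm_mul_add_sq w j u).trans (by gcongr)
    _ = V / (2 * mmin) * (‖j‖ ^ 2 + u ^ 2) := by ring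

lemma coercivity_estimate_pointwise {m ρ mmin mmax rmin V : ℝ} {w : E} (hmmin : 0 < mmin)
    (hm : mmin ≤ m ∧ m ≤ mmax) (hρ : rmin ≤ ρ) (hw : ‖w‖ ≤ V) (j : E) (u : ℝ) :
    (rmin - V / (2 * mmin)) * u ^ 2 + (1 / mmax - V / (2 * mmin)) * ‖j‖ ^ 2 ≤
      m⁻¹ * ‖j‖ ^ 2 + ρ * u ^ 2 - m⁻¹ * inner ℝ w j * u := by
  have hcross := (le_abs_self _).trans (abs_inv_mul_inner_mul_le hmmin hm.1 hw j u)
  have hdiff : 1 / mmax * ‖j‖ ^ 2 ≤ m⁻¹ * ‖j‖ ^ 2 := by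
    rw [one_div]; gcongr; exacts [hmmin.trans_le hm.1, hm.2]
  have hreac : rmin * u ^ 2 ≤ ρ * u ^ 2 := by gcongr
  linarith

end Pointwise

section Integrability

variable {α E : Type*} [MeasurableSpace α] {ν : Measure α}
  [NormedAddCommGroup E] {m : α → ℝ} {mmin : ℝ}

lemma integrable_inv_mul_sq_norm {J : α → E} (hmmeas : AEMeasurable m ν) (hmmin : 0 < mmin)
    (hm : ∀ᵐ x ∂ν, mmin ≤ m x) (hJ : MemLp J 2 ν) :
    Integrable (fun x => (m x)⁻¹ * ‖J x‖ ^ 2) ν := by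
  have hJ2 := (memLp_two_iff_integrable_sq_norm hJ.aestronglyMeasurable).mp hJ
  refine (hJ2.const_mul mmin⁻¹).mono' ?_ ?_
  · exact hmmeas.inv.aestronglyMeasurable.mul (hJ.aestronglyMeasurable.norm.pow 2)
  · filter_upwards [hm] with x hx
    rw [norm_mul, norm_pow, norm_norm, Real.norm_of_nonneg (inv_nonneg.2 (hmmin.trans_le hx).le)]
    gcongr

lemma integrable_inv_mul_inner_mul [InnerProductSpace ℝ E] {V : ℝ} {w J : α → E} {u : α → ℝ}
    (hmmeas : AEMeasurable m ν) (hwmeas : AEStronglyMeasurable w ν) (hmmin : 0 < mmin)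
    (hm : ∀ᵐ x ∂ν, mmin ≤ m x) (hw : ∀ᵐ x ∂ν, ‖w x‖ ≤ V) (hu : MemLp u 2 ν) (hJ : MemLp J 2 ν) :
    Integrable (fun x => (m x)⁻¹ * inner ℝ (w x) (J x) * u x) ν := by
  have hJ2 := (memLp_two_iff_integrable_sq_norm hJ.aestronglyMeasurable).mp hJ
  have hu2 := (memLp_two_iff_integrable_sq hu.aestronglyMeasurable).mp hu
  refine ((hJ2.add hu2).const_mul (V / (2 * mmin))).mono' ?_ ?_
  · exact (hmmeas.inv.aestronglyMeasurable.mul (hwmeas.inner hJ.aestronglyMeasurable)).mul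
      hu.aestronglyMeasurable
  · filter_upwards [hm, hw] with x hmx hwx
    exact abs_inv_mul_inner_mul_le hmmin hmx hwx (J x) (u x)

end Integrability

theorem dmh_coercivity_estimate_general
    (Ω : Set (EuclideanSpace ℝ (Fin 3)))
    (μ r : EuclideanSpace ℝ (Fin 3) → ℝ)
    (v : EuclideanSpace ℝ (Fin 3) → EuclideanSpace ℝ (Fin 3))
    (hμmeas : Measurable μ) (hvmeas : Measurable v)
    (μmin μmax rmin Vinf : ℝ)
    (hμmin : 0 < μmin)
    (hμ : ∀ᵐ x ∂(volume.restrict Ω), μmin ≤ μ x ∧ μ x ≤ μmax)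
    (hr : ∀ᵐ x ∂(volume.restrict Ω), rmin ≤ r x)
    (hv : ∀ᵐ x ∂(volume.restrict Ω), ‖v x‖ ≤ Vinf)
    (hVinf : Vinf < 2 * μmin * min (1 / μmax) rmin)
    (u : EuclideanSpace ℝ (Fin 3) → ℝ)
    (J : EuclideanSpace ℝ (Fin 3) → EuclideanSpace ℝ (Fin 3))
    (hu : MemLp u 2 (volume.restrict Ω))
    (hJ : MemLp J 2 (volume.restrict Ω))
    (hru : Integrable (fun x => r x * u x ^ 2) (volume.restrict Ω)) :
    0 < rmin - Vinf / (2 * μmin) ∧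
    0 < 1 / μmax - Vinf / (2 * μmin) ∧
    (∫ x in Ω, (μ x)⁻¹ * ‖J x‖ ^ 2) + (∫ x in Ω, r x * u x ^ 2)
        - (∫ x in Ω, (μ x)⁻¹ * (inner ℝ (v x) (J x) : ℝ) * u x)
      ≥ (rmin - Vinf / (2 * μmin)) * (∫ x in Ω, u x ^ 2)
        + (1 / μmax - Vinf / (2 * μmin)) * (∫ x in Ω, ‖J x‖ ^ 2) := by
  have h2μ : 0 < 2 * μmin := by positivity
  refine ⟨sub_pos.2 ((div_lt_iff₀' h2μ).2 (hVinf.trans_le (by gcongr; exact min_le_right _ _))),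
    sub_pos.2 ((div_lt_iff₀' h2μ).2 (hVinf.trans_le (by gcongr; exact min_le_left _ _))), ?_⟩
  have hμlow : ∀ᵐ x ∂(volume.restrict Ω), μmin ≤ μ x := hμ.mono fun _ h => h.1
  have hdiff := integrable_inv_mul_sq_norm hμmeas.aemeasurable hμmin hμlow hJ
  have hadv := integrable_inv_mul_inner_mul hμmeas.aemeasurable hvmeas.aestronglyMeasurable
    hμmin hμlow hv hu hJ
  have hu2 := ((memLp_two_iff_integrable_sq hu.aestronglyMeasurable).mp hu).const_mul
    (rmin - Vinf / (2 * μmin))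
  have hJ2 := ((memLp_two_iff_integrable_sq_norm hJ.aestronglyMeasurable).mp hJ).const_mul
    (1 / μmax - Vinf / (2 * μmin))
  have hdr : Integrable (fun x => (μ x)⁻¹ * ‖J x‖ ^ 2 + r x * u x ^ 2) (volume.restrict Ω) :=
    hdiff.add hru
  have key := integral_mono_ae (hu2.add hJ2) (hdr.sub hadv) <| by
    filter_upwards [hμ, hr, hv] with x hμx hrx hvx
    exact coercivity_estimate_pointwise hμmin hμx hrx hvx (J x) (u x)
  simp only [Pi.add_apply, Pi.sub_apply] at key
  rwa [integral_sub hdr hadv, integral_add hdiff hru, integral_add hu2 hJ2,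
    integral_const_mul, integral_const_mul] at key

/-- Coercivity estimate (via Young's inequality) for the advection-diffusion-reaction
bilinear form `a` on the kernel, used in the well-posedness proof of the DMH weak
formulation: with c₀ := r_min − V_∞/(2 μ_min) and c₁ := 1/μ_max − V_∞/(2 μ_min),
if V_∞ < 2 μ_min min(1/μ_max, r_min) then c₀ > 0, c₁ > 0 and
∫ μ⁻¹|J|² + ∫ r u² − ∫ μ⁻¹ (v·J) u ≥ c₀ ‖u‖²_{L²} + c₁ ‖J‖²_{L²}. -/
theorem dmh_coercivity_estimate
    (Ω : Set (EuclideanSpace ℝ (Fin 3))) (hΩ : MeasurableSet Ω)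
    (μ r : EuclideanSpace ℝ (Fin 3) → ℝ)
    (v : EuclideanSpace ℝ (Fin 3) → EuclideanSpace ℝ (Fin 3))
    (hμmeas : Measurable μ) (hrmeas : Measurable r) (hvmeas : Measurable v)
    (μmin μmax rmin Vinf : ℝ)
    (hμmin : 0 < μmin) (hμmax : μmin ≤ μmax) (hrmin : 0 < rmin)
    (hμ : ∀ᵐ x ∂(volume.restrict Ω), μmin ≤ μ x ∧ μ x ≤ μmax)
    (hr : ∀ᵐ x ∂(volume.restrict Ω), rmin ≤ r x)
    (hv : ∀ᵐ x ∂(volume.restrict Ω), ‖v x‖ ≤ Vinf)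
    (hVinf : Vinf < 2 * μmin * min (1 / μmax) rmin)
    (u : EuclideanSpace ℝ (Fin 3) → ℝ)
    (J : EuclideanSpace ℝ (Fin 3) → EuclideanSpace ℝ (Fin 3))
    (hu : MemLp u 2 (volume.restrict Ω))
    (hJ : MemLp J 2 (volume.restrict Ω))
    (hru : Integrable (fun x => r x * u x ^ 2) (volume.restrict Ω)) :
    0 < rmin - Vinf / (2 * μmin) ∧
    0 < 1 / μmax - Vinf / (2 * μmin) ∧
    (∫ x in Ω, (μ x)⁻¹ * ‖J x‖ ^ 2) + (∫ x in Ω, r x * u x ^ 2)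
        - (∫ x in Ω, (μ x)⁻¹ * (inner ℝ (v x) (J x) : ℝ) * u x)
      ≥ (rmin - Vinf / (2 * μmin)) * (∫ x in Ω, u x ^ 2)
        + (1 / μmax - Vinf / (2 * μmin)) * (∫ x in Ω, ‖J x‖ ^ 2) :=
  dmh_coercivity_estimate_general Ω μ r v hμmeas hvmeas μmin μmax rmin Vinf hμmin hμ hr hv hVinf u J
    hu hJ hru
end
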